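/- With F, n, n', g, g', ℓ, d, r as in the rank theorem for double circulant matrices, any r consecutive rows of M(g,g')_{m×(n+n')} are linearly independent: for every i with 0 ≤ i and i + r ≤ m, the rows i, i+1, ..., i+r−1 are linearly independent. -/

import Mathlib

open Polynomial Matrix

/-- The monic polynomial associated to `p` (and `0` for `p = 0`). -/
noncomputable def monicize {F : Type*} [Field F] (p : Polynomial F) : Polynomial F :=
  Polynomial.C p.leadingCoeff⁻¹ * p

/-- The monic greatest common divisor of two polynomials over a field. -/
noncomputable def pgcd {F : Type*} [Field F] (p q : Polynomial F) : Polynomial F :=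
  letI := Classical.decEq F
  monicize (EuclideanDomain.gcd p q)

/-- The monic least common multiple of two polynomials over a field. -/
noncomputable def plcm {F : Type*} [Field F] (p q : Polynomial F) : Polynomial F :=
  letI := Classical.decEq F
  monicize (EuclideanDomain.lcm p q)

/-- Generalized circulant matrix: `(i,k)`-entry is `g_{(k-i) mod n}`. -/
def circMat (F : Type*) [Field F] (m n : ℕ) (g : Polynomial F) :
    Matrix (Fin m) (Fin n) F :=
  Matrix.of fun i k => g.coeff ((k.1 + (n - 1) * i.1) % n)


section Aux

variable {F : Type*} [Field F]

lemma monicize_assoc {p : Polynomial F} (hp : p ≠ 0) : Associated p (monicize p) := by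
  have hu : IsUnit (C p.leadingCoeff⁻¹) :=
    Polynomial.isUnit_C.mpr (isUnit_iff_ne_zero.mpr (inv_ne_zero (leadingCoeff_ne_zero.mpr hp)))
  exact ⟨hu.unit, by rw [IsUnit.unit_spec, monicize, mul_comm]⟩

lemma monicize_ne_zero {p : Polynomial F} (hp : p ≠ 0) : monicize p ≠ 0 :=
  fun h => hp ((monicize_assoc hp).eq_zero_iff.mpr h)

lemma natDegree_monicize (p : Polynomial F) : (monicize p).natDegree = p.natDegree := by
  by_cases hp : p = 0
  · simp [hp, monicize]
  · exact natDegree_C_mul (inv_ne_zero (leadingCoeff_ne_zero.mpr hp))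

lemma dvd_X_pow_gcd_sub_one {p : Polynomial F} {n n' : ℕ} (hn : 0 < n)
    (h1 : p ∣ X ^ n - 1) (h2 : p ∣ X ^ n' - 1) : p ∣ X ^ Nat.gcd n n' - 1 := by
  set I : Ideal (Polynomial F) := Ideal.span {p}
  have key : ∀ k : ℕ, p ∣ X ^ k - 1 ↔ (Ideal.Quotient.mk I X) ^ k = 1 := by
    intro k
    rw [← map_pow, ← sub_eq_zero, ← map_one (Ideal.Quotient.mk I), ← map_sub,
      Ideal.Quotient.eq_zero_iff_mem, Ideal.mem_span_singleton]
  rw [key]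
  rw [key] at h1 h2
  exact orderOf_dvd_iff_pow_eq_one.mp
    (Nat.dvd_gcd (orderOf_dvd_of_pow_eq_one h1) (orderOf_dvd_of_pow_eq_one h2))

lemma row_coeff {n : ℕ} (hn : 0 < n) (g : Polynomial F) (hg : g.degree < n)
    (s k : ℕ) (hk : k < n) :
    ((X ^ s * g) %ₘ (X ^ n - 1)).coeff k = g.coeff ((k + (n - 1) * s) % n) := by
  have h1 : (1 : Polynomial F) = C 1 := by simp
  have hmonic : (X ^ n - 1 : Polynomial F).Monic := by
    rw [h1]; exact monic_X_pow_sub_C 1 hn.ne'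
  have hdeg : (X ^ n - 1 : Polynomial F).degree = n := by
    rw [h1]; exact degree_X_pow_sub_C hn 1
  induction s generalizing k hk with
  | zero =>
      rw [pow_zero, one_mul, (modByMonic_eq_self_iff hmonic).mpr (by rw [hdeg]; exact hg)]
      rw [Nat.mul_zero, Nat.add_zero, Nat.mod_eq_of_lt hk]
  | succ s ih =>
      set q := (X ^ s * g) %ₘ (X ^ n - 1) with hq
      have hqdeg : q.degree < (n : WithBot ℕ) := by
        rw [← hdeg]; exact degree_modByMonic_lt _ hmonic
      have hqc : ∀ j : ℕ, n ≤ j → q.coeff j = 0 := fun j hj =>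
        coeff_eq_zero_of_degree_lt (lt_of_lt_of_le hqdeg (by exact_mod_cast Nat.cast_le.mpr hj))
      set a := q.coeff (n - 1) with ha
      set rem : Polynomial F := X * q - C a * (X ^ n - 1) with hrem
      -- step 1 : reduce to X * q
      have e1 : (X ^ (s + 1) * g) %ₘ (X ^ n - 1) = (X * q) %ₘ (X ^ n - 1) := by
        conv_lhs => rw [pow_succ, mul_comm (X ^ s) X, mul_assoc,
          ← modByMonic_add_div (X ^ s * g) (X ^ n - 1)]
        rw [mul_add, add_modByMonic, mul_left_comm, self_mul_modByMonic hmonic, add_zero]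
      -- step 2 : compute (X * q) %ₘ (X^n - 1)
      have hremdeg : rem.degree < (n : WithBot ℕ) := by
        rw [degree_lt_iff_coeff_zero]
        intro j hj
        have hj' : (n : ℕ) ≤ j := by exact_mod_cast hj
        rw [hrem, coeff_sub, coeff_C_mul, coeff_sub, coeff_X_pow]
        rcases Nat.lt_or_ge n j with hlt | hge
        · have : j ≠ 0 := by omega
          obtain ⟨j', rfl⟩ := Nat.exists_eq_succ_of_ne_zero this
          rw [coeff_X_mul, hqc j' (by omega), coeff_one, if_neg (by omega), if_neg (by omega)]
          ring
        · have hjn : j = n := le_antisymm (by omega) hj'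
          obtain ⟨j', rfl⟩ := Nat.exists_eq_succ_of_ne_zero (show j ≠ 0 by omega)
          rw [coeff_X_mul, coeff_one, if_pos hjn, if_neg (by omega)]
          rw [show j' = n - 1 by omega, ← ha]; ring
      have e2 : (X * q) %ₘ (X ^ n - 1) = rem := by
        have : X * q = rem + (X ^ n - 1) * C a := by rw [hrem]; ring
        rw [this, add_modByMonic, self_mul_modByMonic hmonic, add_zero,
          (modByMonic_eq_self_iff hmonic).mpr (by rw [hdeg]; exact hremdeg)]
      -- step 3 : coefficient of rem
      have e3 : rem.coeff k = q.coeff ((k + n - 1) % n) := by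
        rw [hrem, coeff_sub, coeff_C_mul, coeff_sub, coeff_X_pow, if_neg (by omega), coeff_one]
        rcases Nat.eq_zero_or_pos k with rfl | hkpos
        · rw [if_pos rfl, mul_coeff_zero, coeff_X_zero, zero_mul,
            Nat.mod_eq_of_lt (by omega : 0 + n - 1 < n)]
          rw [ha]; ring
        · obtain ⟨k', rfl⟩ := Nat.exists_eq_succ_of_ne_zero hkpos.ne'
          rw [coeff_X_mul, if_neg (by omega)]
          have : (k' + 1 + n - 1) % n = k' := by
            have : k' + 1 + n - 1 = k' + n := by omega
            rw [this, Nat.add_mod_right, Nat.mod_eq_of_lt (by omega)]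
          rw [this]; ring
      -- step 4 : combine with ih
      rw [e1, e2, e3]
      have hk' : (k + n - 1) % n < n := Nat.mod_lt _ hn
      rw [ih ((k + n - 1) % n) hk']
      congr 1
      have e4 : k + n - 1 = (k + n - 1) % n + n * ((k + n - 1) / n) := by
        rw [Nat.mod_add_div]
      have : ((k + n - 1) % n + (n - 1) * s) % n = (k + n - 1 + (n - 1) * s) % n := by
        conv_rhs => rw [e4]
        rw [Nat.add_right_comm, Nat.add_mul_mod_self_left]
      rw [this]
      have : k + n - 1 + (n - 1) * s = k + (n - 1) * (s + 1) := by
        rw [Nat.mul_succ]; omega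
      rw [this]

lemma key_degree {n n' ℓ : ℕ} (hn : 0 < n) (hn' : 0 < n') (hℓ : ℓ = Nat.gcd n n')
    (hsq : Squarefree (X ^ n - 1 : Polynomial F))
    (hsq' : Squarefree (X ^ n' - 1 : Polynomial F))
    (g g' cp : Polynomial F) (hcp : cp ≠ 0)
    (h1 : (X ^ n - 1 : Polynomial F) ∣ cp * g)
    (h2 : (X ^ n' - 1 : Polynomial F) ∣ cp * g') :
    n + n' ≤ cp.natDegree +
      (pgcd g (X ^ n - 1) * pgcd g' (X ^ n' - 1) * (X ^ ℓ - 1)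
        / pgcd (g * g') (X ^ ℓ - 1)).natDegree := by
  letI := Classical.decEq F
  have hℓpos : 0 < ℓ := by rw [hℓ]; exact Nat.gcd_pos_of_pos_left _ hn
  have hone : (1 : Polynomial F) = C 1 := by simp
  have hMmon : ∀ {j : ℕ}, 0 < j → (X ^ j - 1 : Polynomial F).Monic := fun hj => by
    rw [hone]; exact monic_X_pow_sub_C 1 hj.ne'
  have hMne : ∀ {j : ℕ}, 0 < j → (X ^ j - 1 : Polynomial F) ≠ 0 := fun hj =>
    (hMmon hj).ne_zero
  have hMdeg : ∀ {j : ℕ}, (X ^ j - 1 : Polynomial F).natDegree = j := fun {j} => by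
    rw [hone]; exact natDegree_X_pow_sub_C
  set M : Polynomial F := X ^ n - 1 with hM
  set M' : Polynomial F := X ^ n' - 1 with hM'
  set L : Polynomial F := X ^ ℓ - 1 with hL
  -- the monic gcds
  set A := pgcd g M with hA
  set A' := pgcd g' M' with hA'
  set D := pgcd (g * g') L with hD
  have hgcdA : Associated (EuclideanDomain.gcd g M) A := by
    rw [hA, pgcd]
    exact monicize_assoc (fun h => hMne hn (EuclideanDomain.gcd_eq_zero_iff.mp h).2)
  have hgcdA' : Associated (EuclideanDomain.gcd g' M') A' := by
    rw [hA', pgcd]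
    exact monicize_assoc (fun h => hMne hn' (EuclideanDomain.gcd_eq_zero_iff.mp h).2)
  have hgcdD : Associated (EuclideanDomain.gcd (g * g') L) D := by
    rw [hD, pgcd]
    exact monicize_assoc (fun h => hMne hℓpos (EuclideanDomain.gcd_eq_zero_iff.mp h).2)
  have hAne : A ≠ 0 := fun h => hMne hn (EuclideanDomain.gcd_eq_zero_iff.mp
    (hgcdA.eq_zero_iff.mpr h)).2
  have hA'ne : A' ≠ 0 := fun h => hMne hn' (EuclideanDomain.gcd_eq_zero_iff.mp
    (hgcdA'.eq_zero_iff.mpr h)).2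
  have hDne : D ≠ 0 := fun h => hMne hℓpos (EuclideanDomain.gcd_eq_zero_iff.mp
    (hgcdD.eq_zero_iff.mpr h)).2
  have hAdvdM : A ∣ M := hgcdA.symm.dvd.trans (EuclideanDomain.gcd_dvd_right g M)
  have hAdvdg : A ∣ g := hgcdA.symm.dvd.trans (EuclideanDomain.gcd_dvd_left g M)
  have hA'dvdM : A' ∣ M' := hgcdA'.symm.dvd.trans (EuclideanDomain.gcd_dvd_right g' M')
  have hA'dvdg : A' ∣ g' := hgcdA'.symm.dvd.trans (EuclideanDomain.gcd_dvd_left g' M')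
  have hDdvdL : D ∣ L := hgcdD.symm.dvd.trans (EuclideanDomain.gcd_dvd_right _ L)
  have hDdvdgg : D ∣ g * g' := hgcdD.symm.dvd.trans (EuclideanDomain.gcd_dvd_left _ L)
  -- complements
  set h : Polynomial F := M / A with hh
  set h' : Polynomial F := M' / A' with hh'
  set Q : Polynomial F := L / D with hQ
  have hAh : A * h = M := EuclideanDomain.mul_div_cancel' hAne hAdvdM
  have hA'h' : A' * h' = M' := EuclideanDomain.mul_div_cancel' hA'ne hA'dvdM
  have hDQ : D * Q = L := EuclideanDomain.mul_div_cancel' hDne hDdvdL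
  have hhne : h ≠ 0 := fun h0 => hMne hn (by rw [← hM, ← hAh, h0, mul_zero])
  have hh'ne : h' ≠ 0 := fun h0 => hMne hn' (by rw [← hM', ← hA'h', h0, mul_zero])
  have hQne : Q ≠ 0 := fun h0 => hMne hℓpos (by rw [← hL, ← hDQ, h0, mul_zero])
  -- coprimality of A and h from squarefreeness
  have hcopAh : IsCoprime A h := by
    rw [← EuclideanDomain.gcd_isUnit_iff]
    exact hsq _ (by
      rw [← hAh]
      exact mul_dvd_mul (EuclideanDomain.gcd_dvd_left A h) (EuclideanDomain.gcd_dvd_right A h))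
  have hcopA'h' : IsCoprime A' h' := by
    rw [← EuclideanDomain.gcd_isUnit_iff]
    exact hsq' _ (by
      rw [← hA'h']
      exact mul_dvd_mul (EuclideanDomain.gcd_dvd_left A' h')
        (EuclideanDomain.gcd_dvd_right A' h'))
  -- h is coprime to g
  have hcophg : IsCoprime h g := by
    rw [← EuclideanDomain.gcd_isUnit_iff]
    refine hcopAh.isUnit_of_dvd' ?_ (EuclideanDomain.gcd_dvd_left h g)
    refine (EuclideanDomain.dvd_gcd (EuclideanDomain.gcd_dvd_right h g)
      (dvd_trans (EuclideanDomain.gcd_dvd_left h g) (Dvd.intro_left A hAh))).trans hgcdA.dvd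
  have hcoph'g' : IsCoprime h' g' := by
    rw [← EuclideanDomain.gcd_isUnit_iff]
    refine hcopA'h'.isUnit_of_dvd' ?_ (EuclideanDomain.gcd_dvd_left h' g')
    refine (EuclideanDomain.dvd_gcd (EuclideanDomain.gcd_dvd_right h' g')
      (dvd_trans (EuclideanDomain.gcd_dvd_left h' g') (Dvd.intro_left A' hA'h'))).trans hgcdA'.dvd
  -- h, h' divide cp
  have hhcp : h ∣ cp := hcophg.dvd_of_dvd_mul_right
    ((Dvd.intro_left A hAh).trans h1)
  have hh'cp : h' ∣ cp := hcoph'g'.dvd_of_dvd_mul_right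
    ((Dvd.intro_left A' hA'h').trans h2)
  -- lcm divides cp
  have hlcm : EuclideanDomain.lcm h h' ∣ cp := EuclideanDomain.lcm_dvd hhcp hh'cp
  set G := EuclideanDomain.gcd h h' with hG
  have hGne : G ≠ 0 := fun h0 => hhne (EuclideanDomain.gcd_eq_zero_iff.mp h0).1
  have hlcmne : EuclideanDomain.lcm h h' ≠ 0 := by
    intro h0
    have := EuclideanDomain.gcd_mul_lcm h h'
    rw [h0, mul_zero] at this
    exact (mul_ne_zero hhne hh'ne) this.symm
  have hdeg_lcm : G.natDegree + (EuclideanDomain.lcm h h').natDegree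
      = h.natDegree + h'.natDegree := by
    rw [← natDegree_mul hGne hlcmne, EuclideanDomain.gcd_mul_lcm,
      natDegree_mul hhne hh'ne]
  -- G divides L
  have hGL : G ∣ L := by
    rw [hL, hℓ]
    exact dvd_X_pow_gcd_sub_one hn
      ((EuclideanDomain.gcd_dvd_left h h').trans (Dvd.intro_left A hAh))
      ((EuclideanDomain.gcd_dvd_right h h').trans (Dvd.intro_left A' hA'h'))
  -- G coprime to D
  have hcopGD : IsCoprime G D := by
    have c1 : IsCoprime G g :=
      hcophg.of_isCoprime_of_dvd_left (EuclideanDomain.gcd_dvd_left h h')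
    have c2 : IsCoprime G g' :=
      hcoph'g'.of_isCoprime_of_dvd_left (EuclideanDomain.gcd_dvd_right h h')
    exact (c1.mul_right c2).of_isCoprime_of_dvd_right hDdvdgg
  -- so G divides Q
  have hGQ : G ∣ Q := by
    refine hcopGD.dvd_of_dvd_mul_right ?_
    rw [mul_comm, hDQ]; exact hGL
  have hdegGQ : G.natDegree ≤ Q.natDegree := natDegree_le_of_dvd hGQ hQne
  -- degree bookkeeping
  have e1 : A.natDegree + h.natDegree = n := by
    rw [← natDegree_mul hAne hhne, hAh, hM, hMdeg]
  have e2 : A'.natDegree + h'.natDegree = n' := by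
    rw [← natDegree_mul hA'ne hh'ne, hA'h', hM', hMdeg]
  have e3 : D.natDegree + Q.natDegree = ℓ := by
    rw [← natDegree_mul hDne hQne, hDQ, hL, hMdeg]
  have hDdvdN : D ∣ A * A' * L := hDdvdL.trans (dvd_mul_left L (A * A'))
  have e4 : D.natDegree + (A * A' * L / D).natDegree
      = A.natDegree + A'.natDegree + ℓ := by
    have hNd : D * (A * A' * L / D) = A * A' * L := EuclideanDomain.mul_div_cancel' hDne hDdvdN
    have hquotne : A * A' * L / D ≠ 0 := by
      intro h0
      apply mul_ne_zero (mul_ne_zero hAne hA'ne) (hMne hℓpos)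
      rw [← hNd, h0, mul_zero]
    rw [← natDegree_mul hDne hquotne, hNd, natDegree_mul (mul_ne_zero hAne hA'ne)
      (hMne hℓpos), natDegree_mul hAne hA'ne, hMdeg]
  have hcpdeg : (EuclideanDomain.lcm h h').natDegree ≤ cp.natDegree :=
    natDegree_le_of_dvd hlcm hcp
  omega

lemma block_dvd {n r : ℕ} (hn : 0 < n) (g : Polynomial F) (hg : g.degree < n)
    (i : ℕ) (c : Fin r → F)
    (hck : ∀ k : Fin n,
      ∑ t : Fin r, c t * g.coeff ((k.1 + (n - 1) * (i + t.1)) % n) = 0) :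
    (X ^ n - 1 : Polynomial F) ∣ (∑ t : Fin r, C (c t) * X ^ (t : ℕ)) * g := by
  have hone : (1 : Polynomial F) = C 1 := by simp
  have hmonic : (X ^ n - 1 : Polynomial F).Monic := by
    rw [hone]; exact monic_X_pow_sub_C 1 hn.ne'
  have hdeg : (X ^ n - 1 : Polynomial F).degree = n := by
    rw [hone]; exact degree_X_pow_sub_C hn 1
  set cp : Polynomial F := ∑ t : Fin r, C (c t) * X ^ (t : ℕ) with hcp
  have hrepr : cp * (X ^ i * g) = ∑ t : Fin r, c t • (X ^ (i + t.1) * g) := by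
    rw [hcp, Finset.sum_mul]
    refine Finset.sum_congr rfl fun t _ => ?_
    rw [smul_eq_C_mul, pow_add]; ring
  have hmodsum : (cp * (X ^ i * g)) %ₘ (X ^ n - 1)
      = ∑ t : Fin r, c t • ((X ^ (i + t.1) * g) %ₘ (X ^ n - 1)) := by
    rw [hrepr]
    have : ∀ p : Polynomial F, p %ₘ (X ^ n - 1) = modByMonicHom (X ^ n - 1) p :=
      fun p => rfl
    simp_rw [this, map_sum, LinearMap.map_smul]
  have hrem0 : (cp * (X ^ i * g)) %ₘ (X ^ n - 1) = 0 := by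
    ext j
    rw [coeff_zero]
    rcases Nat.lt_or_ge j n with hj | hj
    · rw [hmodsum, finset_sum_coeff]
      have := hck ⟨j, hj⟩
      simp only [coeff_smul, smul_eq_mul]
      rw [← this]
      refine Finset.sum_congr rfl fun t _ => ?_
      rw [row_coeff hn g hg (i + t.1) j hj]
    · refine coeff_eq_zero_of_degree_lt
        (lt_of_lt_of_le (degree_modByMonic_lt _ hmonic) ?_)
      rw [hdeg]; exact_mod_cast Nat.cast_le.mpr hj
  have hdvd : (X ^ n - 1 : Polynomial F) ∣ X ^ i * (cp * g) := by
    have := (modByMonic_eq_zero_iff_dvd hmonic).mp hrem0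
    rwa [show cp * (X ^ i * g) = X ^ i * (cp * g) by ring] at this
  have hXn : (X : Polynomial F) ^ (n - 1) * X = X ^ n := by
    rw [← pow_succ, Nat.sub_add_cancel hn]
  have hcopX : IsCoprime (X : Polynomial F) (X ^ n - 1) :=
    ⟨X ^ (n - 1), -1, by rw [hXn]; ring⟩
  exact ((hcopX.pow_left : IsCoprime (X ^ i : Polynomial F) _)).symm.dvd_of_dvd_mul_left hdvd

end Aux

theorem stmt_13 (F : Type*) [Field F]
    (m n n' : ℕ) (hm : 0 < m) (hn : 0 < n) (hn' : 0 < n')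
    (hchar : ringChar F = 0 ∨ Nat.Coprime (ringChar F) (n * n'))
    (g g' : Polynomial F) (hg : g.degree < n) (hg' : g'.degree < n')
    (ℓ : ℕ) (hℓ : ℓ = Nat.gcd n n')
    (d : ℕ)
    (hd : d = (pgcd g (X ^ n - 1) * pgcd g' (X ^ n' - 1) * (X ^ ℓ - 1)
                / pgcd (g * g') (X ^ ℓ - 1)).natDegree)
    (r : ℕ) (hr : r = min m (n + n' - d))
    (i : ℕ) (hi : i + r ≤ m) :
    LinearIndependent F
      (fun t : Fin r =>
        Matrix.fromCols (circMat F m n g) (circMat F m n' g') ⟨i + t.1, by omega⟩) := by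
  haveI := ringChar.charP F
  -- `(j : F) ≠ 0` for divisors `j` of `n * n'`
  have hcast : ∀ j : ℕ, 0 < j → j ∣ n * n' → (j : F) ≠ 0 := by
    intro j hj hjd hj0
    have hdvdj : ringChar F ∣ j := (CharP.cast_eq_zero_iff F (ringChar F) j).mp hj0
    rcases hchar with h0 | hcop
    · rw [h0] at hdvdj
      exact hj.ne' (Nat.eq_zero_of_zero_dvd hdvdj)
    · have : ringChar F ∣ 1 := by
        rw [← hcop]
        exact Nat.dvd_gcd dvd_rfl (hdvdj.trans hjd)
      have h1 : ringChar F = 1 := Nat.dvd_one.mp this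
      exact CharP.ringChar_ne_one h1
  have hsq : Squarefree (X ^ n - 1 : Polynomial F) := by
    have := (separable_X_pow_sub_C (1 : F)
      (hcast n hn (Dvd.intro n' rfl)) one_ne_zero).squarefree
    rwa [Polynomial.C_1] at this
  have hsq' : Squarefree (X ^ n' - 1 : Polynomial F) := by
    have := (separable_X_pow_sub_C (1 : F)
      (hcast n' hn' (Dvd.intro_left n rfl)) one_ne_zero).squarefree
    rwa [Polynomial.C_1] at this
  rw [Fintype.linearIndependent_iff]
  intro c hc
  by_contra hcne
  push_neg at hcne
  obtain ⟨t₀, ht₀⟩ := hcne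
  set cp : Polynomial F := ∑ t : Fin r, C (c t) * X ^ (t : ℕ) with hcp
  have hcoeff : ∀ t : Fin r, cp.coeff t = c t := by
    intro t
    rw [hcp, finset_sum_coeff]
    rw [Finset.sum_eq_single t]
    · rw [coeff_C_mul, coeff_X_pow, if_pos rfl, mul_one]
    · intro b _ hb
      rw [coeff_C_mul, coeff_X_pow, if_neg (fun h => hb (Fin.ext h.symm)), mul_zero]
    · intro h
      exact absurd (Finset.mem_univ t) h
  have hcpne : cp ≠ 0 := fun h => ht₀ (by rw [← hcoeff t₀, h, coeff_zero])
  have hcpdeg : cp.natDegree < r := by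
    rw [natDegree_lt_iff_degree_lt hcpne]
    refine lt_of_le_of_lt (degree_sum_le _ _) ?_
    rw [Finset.sup_lt_iff (by exact_mod_cast WithBot.bot_lt_coe r)]
    intro t _
    refine lt_of_le_of_lt (degree_C_mul_X_pow_le _ _) ?_
    exact_mod_cast Nat.cast_lt.mpr t.2
  -- extract the two block conditions
  have hck1 : ∀ k : Fin n,
      ∑ t : Fin r, c t * g.coeff ((k.1 + (n - 1) * (i + t.1)) % n) = 0 := by
    intro k
    have := congrFun hc (Sum.inl k)
    simpa [Finset.sum_apply, Matrix.fromCols_apply_inl, circMat, Pi.smul_apply,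
      smul_eq_mul] using this
  have hck2 : ∀ k : Fin n',
      ∑ t : Fin r, c t * g'.coeff ((k.1 + (n' - 1) * (i + t.1)) % n') = 0 := by
    intro k
    have := congrFun hc (Sum.inr k)
    simpa [Finset.sum_apply, Matrix.fromCols_apply_inr, circMat, Pi.smul_apply,
      smul_eq_mul] using this
  have hdvd1 : (X ^ n - 1 : Polynomial F) ∣ cp * g := block_dvd hn g hg i c hck1
  have hdvd2 : (X ^ n' - 1 : Polynomial F) ∣ cp * g' := block_dvd hn' g' hg' i c hck2
  have hkey := key_degree hn hn' hℓ hsq hsq' g g' cp hcpne hdvd1 hdvd2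
  rw [← hd] at hkey
  have hrle : r ≤ n + n' - d := hr ▸ min_le_right m (n + n' - d)
  omega
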